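/- arXiv:1203.1227 — 3 statements merged into one kernel-verified Lean document; each statement's English description precedes it below -/
import Mathlib

section
/- Consider the process that starts with a positive real width ε₀ and a factor N₀ = 4, and at each step either replaces (ε, N) by (ε/N, N²) (success) or, if N > 4, by (ε, √N) (failure), where failures with N = 4 are impossible because the step with N = 4 always narrows the interval by a factor 4. Then for every target ε > 0 the process reaches a width ≤ ε after finitely many steps. -/
/-!
Along the run the factor is always of the form `4 ^ 2 ^ k`: a success squares it (`k ↦ k + 1`),
a failure takes its square root (`k ↦ k - 1`), and a failure is impossible at `k = 0`. Hence from
a state with exponent `k` at most `k` failures can follow before a success, which divides the width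
by at least `4`. Iterating, the width drops below `ε₀ / 4 ^ j` for every `j`.
-/

def IsQIRRun (ε N : ℕ → ℝ) : Prop :=
  ∀ n, (ε (n + 1) = ε n / N n ∧ N (n + 1) = N n ^ 2) ∨
    (4 < N n ∧ ε (n + 1) = ε n ∧ N (n + 1) = √(N n))

lemma sqrt_four_pow_two_pow_succ (k : ℕ) : √((4 : ℝ) ^ 2 ^ (k + 1)) = 4 ^ 2 ^ k := by
  rw [pow_succ, pow_mul]
  exact Real.sqrt_sq (by positivity)

lemma four_le_four_pow_two_pow (k : ℕ) : (4 : ℝ) ≤ 4 ^ 2 ^ k :=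
  le_self_pow₀ (by norm_num) (Nat.two_pow_pos k).ne'

namespace IsQIRRun

variable {ε N : ℕ → ℝ}

lemma exists_factor_eq_four_pow_two_pow (h : IsQIRRun ε N) (hN0 : N 0 = 4) (n : ℕ) :
    ∃ k : ℕ, N n = 4 ^ 2 ^ k := by
  induction n with
  | zero => exact ⟨0, by simp [hN0]⟩
  | succ n ih =>
    obtain ⟨k, hk⟩ := ih
    rcases h n with ⟨-, hN⟩ | ⟨h4, -, hN⟩
    · exact ⟨k + 1, by rw [hN, hk, ← pow_mul, pow_succ]⟩
    · obtain ⟨j, rfl⟩ : ∃ j, k = j + 1 := by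
        refine Nat.exists_eq_succ_of_ne_zero ?_
        rintro rfl
        norm_num [hk] at h4
      exact ⟨j, by rw [hN, hk, sqrt_four_pow_two_pow_succ]⟩

lemma four_le_factor (h : IsQIRRun ε N) (hN0 : N 0 = 4) (n : ℕ) : 4 ≤ N n := by
  obtain ⟨k, hk⟩ := h.exists_factor_eq_four_pow_two_pow hN0 n
  exact hk ▸ four_le_four_pow_two_pow k

lemma width_pos (h : IsQIRRun ε N) (hε0 : 0 < ε 0) (hN0 : N 0 = 4) (n : ℕ) : 0 < ε n := by
  induction n with
  | zero => exact hε0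
  | succ n ih =>
    have hN : 0 < N n := by linarith [h.four_le_factor hN0 n]
    rcases h n with ⟨hε, -⟩ | ⟨-, hε, -⟩ <;> rw [hε] <;> positivity

lemma exists_width_le_div_four (h : IsQIRRun ε N) (hε0 : 0 < ε 0) (hN0 : N 0 = 4) (k : ℕ) :
    ∀ n, N n = 4 ^ 2 ^ k → ∃ m, ε m ≤ ε n / 4 := by
  induction k with
  | zero =>
    intro n hk
    rcases h n with ⟨hε, -⟩ | ⟨h4, -, -⟩
    · exact ⟨n + 1, by rw [hε, hk]; norm_num⟩
    · norm_num [hk] at h4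
  | succ k ih =>
    intro n hk
    rcases h n with ⟨hε, -⟩ | ⟨-, hε, hN⟩
    · refine ⟨n + 1, ?_⟩
      rw [hε]
      exact div_le_div_of_nonneg_left (h.width_pos hε0 hN0 n).le (by norm_num)
        (h.four_le_factor hN0 n)
    · obtain ⟨m, hm⟩ := ih (n + 1) (by rw [hN, hk, sqrt_four_pow_two_pow_succ])
      exact ⟨m, hε ▸ hm⟩

lemma exists_width_le_div_four_pow (h : IsQIRRun ε N) (hε0 : 0 < ε 0) (hN0 : N 0 = 4) (j : ℕ) :
    ∃ n, ε n ≤ ε 0 / 4 ^ j := by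
  induction j with
  | zero => exact ⟨0, by simp⟩
  | succ j ih =>
    obtain ⟨n, hn⟩ := ih
    obtain ⟨k, hk⟩ := h.exists_factor_eq_four_pow_two_pow hN0 n
    obtain ⟨m, hm⟩ := h.exists_width_le_div_four hε0 hN0 k n hk
    refine ⟨m, hm.trans ?_⟩
    rw [pow_succ, ← div_div]
    gcongr

end IsQIRRun

theorem qir_process_terminates
    (ε N : ℕ → ℝ) (hε0 : 0 < ε 0) (hN0 : N 0 = 4)
    (hstep : ∀ n,
      (ε (n + 1) = ε n / N n ∧ N (n + 1) = (N n)^2) ∨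
      (4 < N n ∧ ε (n + 1) = ε n ∧ N (n + 1) = Real.sqrt (N n))) :
    ∀ target : ℝ, 0 < target → ∃ n, ε n ≤ target := by
  intro target htarget
  have hrun : IsQIRRun ε N := hstep
  obtain ⟨j, hj⟩ := pow_unbounded_of_one_lt (ε 0 / target) (by norm_num : (1 : ℝ) < 4)
  obtain ⟨n, hn⟩ := hrun.exists_width_le_div_four_pow hε0 hN0 j
  refine ⟨n, hn.trans ?_⟩
  rw [div_le_iff₀ (by positivity)]
  rw [div_lt_iff₀ htarget] at hj
  linarith
end

section
/- In the QIR process starting from a narrow-enough interval of width ε (ε·C < 1/8) and any refinement factor N ≥ 4 from the set {4^(2^k)}, there are only finitely many failures before the refinement factor becomes small enough, after which every subsequent step succeeds. -/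
/-!
The potential `Φ n = N n * ε n * C` is unchanged by a successful step, since `N² · (ε / N) = N · ε`.
A failed step happens only when `Φ ≥ 1/2` and `N > 4`, and then `√N ≤ N / 2` halves `Φ`.
So `Φ` halves until it drops below `1/2`, after which it stays there and every step succeeds.
-/

lemma sq_mul_div_self {G₀ : Type*} [CommGroupWithZero G₀] (a b : G₀) : a ^ 2 * (b / a) = a * b := by
  rw [mul_div_assoc', sq, mul_assoc, mul_div_cancel_left_of_imp fun h => by simp [h]]

lemma Real.sqrt_le_half_self {x : ℝ} (hx : 4 ≤ x) : √x ≤ x / 2 :=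
  (Real.sqrt_le_left (by linarith)).2 (by nlinarith)

lemma Real.sqrt_mul_le_half_mul {x a : ℝ} (hx : 4 ≤ x) (ha : 0 ≤ x * a) :
    √x * a ≤ 1 / 2 * (x * a) := by
  have ha' : 0 ≤ a := nonneg_of_mul_nonneg_right ha (by linarith)
  calc √x * a ≤ x / 2 * a := mul_le_mul_of_nonneg_right (Real.sqrt_le_half_self hx) ha'
    _ = 1 / 2 * (x * a) := by ring

section Contracting

variable {u : ℕ → ℝ} {c r : ℝ}

lemma le_pow_mul_of_contracting (hr : 0 ≤ r) {n : ℕ} (hcontract : ∀ k < n, u (k + 1) ≤ r * u k) :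
    u n ≤ r ^ n * u 0 := by
  induction n with
  | zero => simp
  | succ n ih =>
    calc u (n + 1) ≤ r * u n := hcontract n n.lt_succ_self
      _ ≤ r * (r ^ n * u 0) :=
        mul_le_mul_of_nonneg_left (ih fun k hk => hcontract k (hk.trans n.lt_succ_self)) hr
      _ = r ^ (n + 1) * u 0 := by ring

lemma exists_lt_of_contracting_above (hc : 0 < c) (hr0 : 0 ≤ r) (hr1 : r < 1)
    (hcontract : ∀ n, c ≤ u n → u (n + 1) ≤ r * u n) : ∃ m, u m < c := by
  by_contra! hge
  have hlim : Filter.Tendsto (fun n => r ^ n * u 0) Filter.atTop (nhds 0) := by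
    simpa using (tendsto_pow_atTop_nhds_zero_of_lt_one hr0 hr1).mul_const (u 0)
  obtain ⟨n, hn⟩ := (hlim.eventually (gt_mem_nhds hc)).exists
  exact (hge n).not_gt <|
    (le_pow_mul_of_contracting hr0 fun k _ => hcontract k (hge k)).trans_lt hn

lemma eventually_lt_of_contracting_above (hc : 0 < c) (hr0 : 0 ≤ r) (hr1 : r < 1)
    (hstay : ∀ n, u n < c → u (n + 1) < c)
    (hcontract : ∀ n, c ≤ u n → u (n + 1) ≤ r * u n) : ∃ m, ∀ n ≥ m, u n < c := by
  obtain ⟨m, hm⟩ := exists_lt_of_contracting_above hc hr0 hr1 hcontract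
  refine ⟨m, fun n hn => ?_⟩
  induction n, hn using Nat.le_induction with
  | base => exact hm
  | succ n _ ih => exact hstay n ih

end Contracting

theorem qir_eventually_all_success_general
    (C : ℝ)
    (ε N : ℕ → ℝ)
    (hstep : ∀ n,
      (N n * ε n * C < 1/2 ∧ ε (n + 1) = ε n / N n ∧ N (n + 1) = (N n)^2) ∨
      (¬ (N n * ε n * C < 1/2) ∧ 4 < N n ∧ ε (n + 1) = ε n ∧
        N (n + 1) = Real.sqrt (N n))) :
    ∃ m, ∀ n ≥ m, N n * ε n * C < 1/2 := by
  refine eventually_lt_of_contracting_above (u := fun n => N n * ε n * C) (r := 1 / 2)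
    (by norm_num) (by norm_num) (by norm_num) (fun n hlt => ?_) (fun n hge => ?_)
  · rcases hstep n with ⟨-, hε, hN⟩ | ⟨hfail, -⟩
    · simpa only [hε, hN, sq_mul_div_self] using hlt
    · exact absurd hlt hfail
  · rcases hstep n with ⟨hsucc, -⟩ | ⟨-, hN4, hε, hN⟩
    · exact absurd hsucc hge.not_gt
    · simp only [hε, hN, mul_assoc] at hge ⊢
      exact Real.sqrt_mul_le_half_mul hN4.le (by linarith)

theorem qir_eventually_all_success
    (C : ℝ) (hC : 0 < C)
    (ε N : ℕ → ℝ)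
    (hnarrow : ε 0 * C < 1/8)
    (hN0 : ∃ k : ℕ, N 0 = 4 ^ (2 ^ k))
    (hstep : ∀ n,
      (N n * ε n * C < 1/2 ∧ ε (n + 1) = ε n / N n ∧ N (n + 1) = (N n)^2) ∨
      (¬ (N n * ε n * C < 1/2) ∧ 4 < N n ∧ ε (n + 1) = ε n ∧
        N (n + 1) = Real.sqrt (N n))) :
    ∃ m, ∀ n ≥ m, N n * ε n * C < 1/2 :=
  qir_eventually_all_success_general C ε N hstep
end

section
/- Let f(a), f(b) be approximate values with relative errors at most 2^{-(m+2)} of the true values F(a), F(b), where F(a)·F(b) < 0 and N = 2^m. Then the computed index κ' = round(N·f(a)/(f(a)−f(b))) differs from the exact index κ = round(N·F(a)/(F(a)−F(b))) by at most 1. -/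
/-!
Write `ε = 2^(-m-2)`, so that `N ε = 1/4`. Cross-multiplying,
`fa/(fa-fb) - Fa/(Fa-Fb) = (Fa fb - Fb fa) / ((fa-fb)(Fa-Fb))`; the numerator is at most
`2ε|Fa||Fb|`, and since `Fa`, `Fb` have opposite signs `|Fa-Fb| = |Fa|+|Fb|` and
`|fa-fb| ≥ (1-ε)(|Fa|+|Fb|)`. By AM-GM the quotient is at most `ε/(2(1-ε))`, so the unrounded
indices differ by at most `1/(8(1-ε)) ≤ 1/6 < 1`, and reals less than `1` apart round to
integers at most `1` apart.
-/

lemma abs_sub_eq_abs_add_abs_of_mul_neg {a b : ℝ} (h : a * b < 0) : |a - b| = |a| + |b| := by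
  rcases mul_neg_iff.mp h with ⟨ha, hb⟩ | ⟨ha, hb⟩
  · rw [abs_of_pos ha, abs_of_neg hb, abs_of_pos (by linarith)]; ring
  · rw [abs_of_neg ha, abs_of_pos hb, abs_of_neg (by linarith)]; ring

lemma abs_round_sub_round_le_one {x y : ℝ} (h : |x - y| < 1) : |round x - round y| ≤ 1 := by
  obtain ⟨hx₁, hx₂⟩ := abs_le.mp (abs_sub_round x)
  obtain ⟨hy₁, hy₂⟩ := abs_le.mp (abs_sub_round y)
  obtain ⟨h₁, h₂⟩ := abs_lt.mp h
  have hcast : |((round x - round y : ℤ) : ℝ)| < 2 := by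
    push_cast
    exact abs_lt.mpr ⟨by linarith, by linarith⟩
  have : |round x - round y| < 2 := by exact_mod_cast hcast
  omega

lemma abs_div_sub_sub_div_sub_le {a b a' b' ε : ℝ} (hab : a * b < 0) (hε : ε < 1)
    (ha : |a' - a| ≤ ε * |a|) (hb : |b' - b| ≤ ε * |b|) :
    |a' / (a' - b') - a / (a - b)| ≤ ε / (2 * (1 - ε)) := by
  have hsum : |a - b| = |a| + |b| := abs_sub_eq_abs_add_abs_of_mul_neg hab
  have ha₀ : 0 < |a| := abs_pos.mpr (left_ne_zero_of_mul hab.ne)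
  have hpos : 0 < |a| + |b| := add_pos_of_pos_of_nonneg ha₀ (abs_nonneg b)
  have hε₀ : 0 ≤ ε := nonneg_of_mul_nonneg_left ((abs_nonneg _).trans ha) ha₀
  have hden : (1 - ε) * (|a| + |b|) ≤ |a' - b'| := by
    have h₁ := abs_sub_abs_le_abs_sub (a - b) (a' - b')
    have h₂ : |(a - b) - (a' - b')| ≤ |b' - b| + |a' - a| := by
      rw [show (a - b) - (a' - b') = (b' - b) - (a' - a) by ring]; exact abs_sub _ _
    rw [hsum] at h₁
    linarith
  have hden_pos : 0 < |a' - b'| := lt_of_lt_of_le (by nlinarith) hden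
  have hnum : |a * b' - b * a'| ≤ 2 * ε * (|a| * |b|) := by
    calc |a * b' - b * a'| = |a * (b' - b) - b * (a' - a)| := by ring_nf
      _ ≤ |a| * |b' - b| + |b| * |a' - a| := by
        simpa only [abs_mul] using abs_sub (a * (b' - b)) (b * (a' - a))
      _ ≤ |a| * (ε * |b|) + |b| * (ε * |a|) := by gcongr
      _ = 2 * ε * (|a| * |b|) := by ring
  have hamgm : 4 * (|a| * |b|) ≤ (|a| + |b|) ^ 2 := by nlinarith [sq_nonneg (|a| - |b|)]
  have hcross : a' / (a' - b') - a / (a - b) = (a * b' - b * a') / ((a' - b') * (a - b)) := by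
    have hd' : a' - b' ≠ 0 := abs_pos.mp hden_pos
    have hd : a - b ≠ 0 := abs_pos.mp (hsum ▸ hpos)
    field_simp; ring
  rw [hcross, abs_div, abs_mul, hsum, div_le_div_iff₀ (by positivity) (by linarith)]
  calc |a * b' - b * a'| * (2 * (1 - ε)) ≤ 2 * ε * (|a| * |b|) * (2 * (1 - ε)) := by gcongr
    _ = ε * (1 - ε) * (4 * (|a| * |b|)) := by ring
    _ ≤ ε * (1 - ε) * (|a| + |b|) ^ 2 := by gcongr
    _ = ε * ((1 - ε) * (|a| + |b|) * (|a| + |b|)) := by ring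
    _ ≤ ε * (|a' - b'| * (|a| + |b|)) := by gcongr

theorem approximate_index_error_general
    (Fa Fb fa fb : ℝ) (hsign : Fa * Fb < 0)
    (m : ℕ) (N : ℝ) (hN : N = 2 ^ m)
    (hfa : |fa - Fa| ≤ 2 ^ (-(m : ℤ) - 2) * |Fa|)
    (hfb : |fb - Fb| ≤ 2 ^ (-(m : ℤ) - 2) * |Fb|) :
    |round (N * fa / (fa - fb)) - round (N * Fa / (Fa - Fb))| ≤ 1 := by
  set ε : ℝ := 2 ^ (-(m : ℤ) - 2)
  have hNε : N * ε = 1 / 4 := by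
    rw [hN, ← zpow_natCast, ← zpow_add₀ two_ne_zero, show (m : ℤ) + (-(m : ℤ) - 2) = -2 by ring]
    norm_num
  have hε : ε ≤ 1 / 4 :=
    calc ε ≤ (2 : ℝ) ^ (-2 : ℤ) := zpow_le_zpow_right₀ one_le_two (by omega)
      _ = 1 / 4 := by norm_num
  have hN₀ : 0 ≤ N := hN ▸ by positivity
  apply abs_round_sub_round_le_one
  calc |N * fa / (fa - fb) - N * Fa / (Fa - Fb)|
    _ = N * |fa / (fa - fb) - Fa / (Fa - Fb)| := by
      rw [mul_div_assoc, mul_div_assoc, ← mul_sub, abs_mul, abs_of_nonneg hN₀]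
    _ ≤ N * (ε / (2 * (1 - ε))) :=
      mul_le_mul_of_nonneg_left (abs_div_sub_sub_div_sub_le hsign (by linarith) hfa hfb) hN₀
    _ = 1 / (8 * (1 - ε)) := by
      rw [← mul_div_assoc, hNε]; field_simp; ring
    _ < 1 := by rw [div_lt_one (by linarith)]; linarith

theorem approximate_index_error
    (Fa Fb fa fb : ℝ) (hsign : Fa * Fb < 0)
    (m : ℕ) (hm : 1 ≤ m) (N : ℝ) (hN : N = 2 ^ m)
    (hfa : |fa - Fa| ≤ 2 ^ (-(m : ℤ) - 2) * |Fa|)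
    (hfb : |fb - Fb| ≤ 2 ^ (-(m : ℤ) - 2) * |Fb|) :
    |round (N * fa / (fa - fb)) - round (N * Fa / (Fa - Fb))| ≤ 1 :=
  approximate_index_error_general Fa Fb fa fb hsign m N hN hfa hfb
end
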